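/- (Upper bound on the looptree pseudo-distance.) If 0 ≤ s < t ≤ 1, then d(s,t) ≤ f(s) + f(t−) − 2·I_s^t. -/

import Mathlib

open Set Filter

/-- The infimum `I_s^t` of `f` over the interval `[s, t]`. -/
noncomputable def infIcc (f : ℝ → ℝ) (s t : ℝ) : ℝ := sInf (f '' Set.Icc s t)

/-- The genealogical relation `s ≼ t` associated with the excursion-type function `f`,
where `fl` is the left-limit function of `f` (with the convention `fl 0 = 0`):
`s ≼ t ↔ s ≤ t ∧ f(s-) ≤ I_s^t`. -/
def Prec (f fl : ℝ → ℝ) (s t : ℝ) : Prop := s ≤ t ∧ fl s ≤ infIcc f s t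

/-- The jump `Δ_t = f(t) - f(t-)` of `f` at `t` (with the convention `fl 0 = 0`
this gives `Δ_0 = 0` for `f 0 = 0`). -/
def jump (f fl : ℝ → ℝ) (t : ℝ) : ℝ := f t - fl t

/-- The position `x_s^t = I_s^t - f(s-)` of the ancestral line of `t` in the loop at `s`. -/
noncomputable def xpos (f fl : ℝ → ℝ) (s t : ℝ) : ℝ := infIcc f s t - fl s

/-- Distance on the cycle of length `D`: `δ_D(a,b) = min (|a-b|, D - |a-b|)`. -/
def cycleDist (D a b : ℝ) : ℝ := min |a - b| (D - |a - b|)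

/-- `d₀(s,t) = ∑_{s ≺ r ≼ t} δ_{Δ_r}(0, x_r^t)`. -/
noncomputable def dZero (f fl : ℝ → ℝ) (s t : ℝ) : ℝ :=
  ∑' r : {r : ℝ // Prec f fl s r ∧ s ≠ r ∧ Prec f fl r t},
    cycleDist (jump f fl r.1) 0 (xpos f fl r.1 t)

/-- The most recent common ancestor `s ∧ t` of `s` and `t`: the greatest common
`≼`-lower bound of `s` and `t` in `[0,1]`, realized as the supremum of the set of
common lower bounds. -/
noncomputable def mca (f fl : ℝ → ℝ) (s t : ℝ) : ℝ :=
  sSup {r : ℝ | r ∈ Set.Icc (0:ℝ) 1 ∧ Prec f fl r s ∧ Prec f fl r t}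

/-- The looptree pseudo-distance
`d(s,t) = δ_{Δ_{s∧t}}(x_{s∧t}^s, x_{s∧t}^t) + d₀(s∧t, s) + d₀(s∧t, t)`. -/
noncomputable def looptreeDist (f fl : ℝ → ℝ) (s t : ℝ) : ℝ :=
  cycleDist (jump f fl (mca f fl s t)) (xpos f fl (mca f fl s t) s) (xpos f fl (mca f fl s t) t)
    + dZero f fl (mca f fl s t) s + dZero f fl (mca f fl s t) t

/-!
Write `m = s ∧ t`. On `[m, s]` the function `f` stays above `I_s^t`, so `I_m^t = I_s^t`.
The loop term at `m` is at most `|x_m^s - x_m^t| = I_m^s - I_m^t`, and `d₀(a, b) ≤ f(b-) - I_a^b`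
because the positions `x_r^b` along the ancestral line of `b` telescope. Adding the three
bounds gives `f(s) + f(t-) - 2 I_s^t`; `f(s)` rather than `f(s-)` is what covers `m = s`.
-/

open Topology

theorem IsLUB.frequently_mem_nhdsLT {α : Type*} [TopologicalSpace α] [LinearOrder α]
    [OrderTopology α] {s : Set α} {a : α} (ha : IsLUB s a) (hs : s.Nonempty) (has : a ∉ s) :
    ∃ᶠ x in 𝓝[<] a, x ∈ s := by
  have h := ha.frequently_mem hs
  rw [← Iio_insert, nhdsWithin_insert, frequently_sup, frequently_pure] at h
  exact h.resolve_left has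

theorem cycleDist_le_abs_sub (D a b : ℝ) : cycleDist D a b ≤ |a - b| :=
  min_le_left _ _

theorem cycleDist_zero_self_nonpos (D : ℝ) : cycleDist D 0 D ≤ 0 :=
  (min_le_right _ _).trans <| sub_nonpos.2 <| by rw [zero_sub, abs_neg]; exact le_abs_self D

section Looptree

variable {f fl : ℝ → ℝ}

theorem infIcc_le (hf_nonneg : ∀ t ∈ Icc (0:ℝ) 1, 0 ≤ f t) {a b x : ℝ} (ha : 0 ≤ a)
    (hb : b ≤ 1) (hx : x ∈ Icc a b) : infIcc f a b ≤ f x := by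
  refine csInf_le ⟨0, ?_⟩ ⟨x, hx, rfl⟩
  rintro _ ⟨y, hy, rfl⟩
  exact hf_nonneg y ⟨ha.trans hy.1, hy.2.trans hb⟩

theorem le_infIcc {a b C : ℝ} (hab : a ≤ b) (h : ∀ x ∈ Icc a b, C ≤ f x) : C ≤ infIcc f a b :=
  le_csInf ((nonempty_Icc.2 hab).image f) (forall_mem_image.2 h)

theorem infIcc_mono (hf_nonneg : ∀ t ∈ Icc (0:ℝ) 1, 0 ≤ f t) {a a' b b' : ℝ}
    (ha : 0 ≤ a) (hb : b ≤ 1) (haa' : a ≤ a') (hb'b : b' ≤ b) (h : a' ≤ b') :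
    infIcc f a b ≤ infIcc f a' b' :=
  le_infIcc h fun _ hx => infIcc_le hf_nonneg ha hb ⟨haa'.trans hx.1, hx.2.trans hb'b⟩

theorem infIcc_self (b : ℝ) : infIcc f b b = f b := by
  rw [infIcc, Icc_self, image_singleton, csInf_singleton]

theorem xpos_self (b : ℝ) : xpos f fl b b = jump f fl b := by
  rw [xpos, jump, infIcc_self]

theorem infIcc_le_leftLim
    (hf_left : ∀ t ∈ Ioc (0:ℝ) 1, Tendsto f (𝓝[<] t) (𝓝 (fl t)))
    (hf_nonneg : ∀ t ∈ Icc (0:ℝ) 1, 0 ≤ f t)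
    {a b c : ℝ} (ha : 0 ≤ a) (hac : a < c) (hcb : c ≤ b) (hb : b ≤ 1) :
    infIcc f a b ≤ fl c := by
  refine ge_of_tendsto (hf_left c ⟨ha.trans_lt hac, hcb.trans hb⟩) ?_
  filter_upwards [Ioo_mem_nhdsLT hac] with x hx
  exact infIcc_le hf_nonneg ha hb ⟨hx.1.le, hx.2.le.trans hcb⟩

theorem leftLim_le_of_frequently
    (hf_left : ∀ t ∈ Ioc (0:ℝ) 1, Tendsto f (𝓝[<] t) (𝓝 (fl t)))
    {v C : ℝ} (hv : v ∈ Ioc (0:ℝ) 1) (h : ∃ᶠ x in 𝓝[<] v, f x ≤ C) : fl v ≤ C :=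
  isClosed_Iic.mem_of_frequently_of_tendsto h (hf_left v hv)

/-- Along `a < r₁ < ⋯ < rₙ < b` the positions `x_{rᵢ}^b` telescope: each is at most
`f(rᵢ₊₁-) - f(rᵢ-)` because `I_{rᵢ}^b ≤ f(rᵢ₊₁-)`. -/
theorem sum_xpos_le
    (hf_left : ∀ t ∈ Ioc (0:ℝ) 1, Tendsto f (𝓝[<] t) (𝓝 (fl t)))
    (hf_nonneg : ∀ t ∈ Icc (0:ℝ) 1, 0 ≤ f t)
    {b : ℝ} (hb : b ≤ 1) (F : Finset ℝ) (hFb : ∀ r ∈ F, r < b)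
    {a : ℝ} (ha : 0 ≤ a) (hab : a < b) (haF : ∀ r ∈ F, a < r) :
    ∑ r ∈ F, xpos f fl r b ≤ fl b - infIcc f a b := by
  induction F using Finset.induction_on_min generalizing a with
  | empty =>
    simpa using infIcc_le_leftLim hf_left hf_nonneg ha hab le_rfl hb
  | insert r F hrF ih =>
    have har := haF r (Finset.mem_insert_self r F)
    have hrb := hFb r (Finset.mem_insert_self r F)
    have hF := ih (fun x hx => hFb x (Finset.mem_insert_of_mem hx)) (ha.trans har.le) hrb hrF
    have hr := infIcc_le_leftLim hf_left hf_nonneg ha har hrb.le hb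
    rw [Finset.sum_insert fun h => (hrF r h).false, xpos]
    linarith

theorem cycleDist_jump_xpos_le {r b : ℝ} (h : Prec f fl r b) :
    cycleDist (jump f fl r) 0 (xpos f fl r b) ≤ if r < b then xpos f fl r b else 0 := by
  split_ifs with hrb
  · refine (cycleDist_le_abs_sub _ _ _).trans_eq ?_
    rw [zero_sub, abs_neg, abs_of_nonneg (show 0 ≤ xpos f fl r b from sub_nonneg.2 h.2)]
  · rw [le_antisymm h.1 (not_lt.1 hrb), xpos_self]
    exact cycleDist_zero_self_nonpos _

theorem dZero_le_leftLim_sub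
    (hf_left : ∀ t ∈ Ioc (0:ℝ) 1, Tendsto f (𝓝[<] t) (𝓝 (fl t)))
    (hf_nonneg : ∀ t ∈ Icc (0:ℝ) 1, 0 ≤ f t)
    {a b : ℝ} (ha : 0 ≤ a) (hab : a < b) (hb : b ≤ 1) :
    dZero f fl a b ≤ fl b - infIcc f a b := by
  refine tsum_le_of_sum_le'
    (sub_nonneg.2 (infIcc_le_leftLim hf_left hf_nonneg ha hab le_rfl hb)) fun u => ?_
  calc ∑ i ∈ u, cycleDist (jump f fl i.1) 0 (xpos f fl i.1 b)
      ≤ ∑ i ∈ u, if i.1 < b then xpos f fl i.1 b else 0 :=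
        Finset.sum_le_sum fun i _ => cycleDist_jump_xpos_le i.2.2.2
    _ = ∑ r ∈ (u.image Subtype.val).filter (· < b), xpos f fl r b := by
        rw [Finset.sum_filter, Finset.sum_image fun x _ y _ h => Subtype.val_injective h]
    _ ≤ fl b - infIcc f a b := by
        refine sum_xpos_le hf_left hf_nonneg hb _ (fun r hr => (Finset.mem_filter.1 hr).2) ha hab
          fun r hr => ?_
        obtain ⟨i, -, rfl⟩ := Finset.mem_image.1 (Finset.mem_filter.1 hr).1
        exact lt_of_le_of_ne i.2.1.1 i.2.2.1

theorem dZero_self (a : ℝ) : dZero f fl a a = 0 :=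
  (tsum_congr fun r => absurd (le_antisymm r.2.1.1 r.2.2.2.1) r.2.2.1).trans tsum_zero

theorem dZero_le_apply_sub
    (hf_left : ∀ t ∈ Ioc (0:ℝ) 1, Tendsto f (𝓝[<] t) (𝓝 (fl t)))
    (hf_nonneg : ∀ t ∈ Icc (0:ℝ) 1, 0 ≤ f t)
    (hf_jump : ∀ t ∈ Icc (0:ℝ) 1, fl t ≤ f t)
    {a b : ℝ} (ha : 0 ≤ a) (hab : a ≤ b) (hb : b ≤ 1) :
    dZero f fl a b ≤ f b - infIcc f a b := by
  rcases hab.eq_or_lt with rfl | hab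
  · rw [dZero_self, infIcc_self, sub_self]
  · linarith [dZero_le_leftLim_sub hf_left hf_nonneg ha hab hb, hf_jump b ⟨ha.trans hab.le, hb⟩]

theorem le_mca {r s t : ℝ} (hr : r ∈ Icc (0:ℝ) 1) (hrs : Prec f fl r s) (hrt : Prec f fl r t) :
    r ≤ mca f fl s t :=
  le_csSup ⟨1, fun _ h => h.1.2⟩ ⟨hr, hrs, hrt⟩

theorem prec_zero (hfl0 : fl 0 = 0) (hf_nonneg : ∀ t ∈ Icc (0:ℝ) 1, 0 ≤ f t) {t : ℝ}
    (ht : t ∈ Icc (0:ℝ) 1) : Prec f fl 0 t :=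
  ⟨ht.1, hfl0.symm ▸ le_infIcc ht.1 fun x hx => hf_nonneg x ⟨hx.1, hx.2.trans ht.2⟩⟩

theorem mca_mem_Icc (hfl0 : fl 0 = 0) (hf_nonneg : ∀ t ∈ Icc (0:ℝ) 1, 0 ≤ f t) {s t : ℝ}
    (hs : s ∈ Icc (0:ℝ) 1) (ht : t ∈ Icc (0:ℝ) 1) : mca f fl s t ∈ Icc 0 s :=
  ⟨le_mca ⟨le_rfl, zero_le_one⟩ (prec_zero hfl0 hf_nonneg hs) (prec_zero hfl0 hf_nonneg ht),
    csSup_le ⟨0, ⟨le_rfl, zero_le_one⟩, prec_zero hfl0 hf_nonneg hs, prec_zero hfl0 hf_nonneg ht⟩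
      fun _ hr => hr.2.1.1⟩

/-- Otherwise the last time `v ∈ [u, s]` at which `f` is below `I_s^t` would be a common
ancestor of `s` and `t` later than `s ∧ t`. -/
theorem infIcc_le_of_mca_lt
    (hf_left : ∀ t ∈ Ioc (0:ℝ) 1, Tendsto f (𝓝[<] t) (𝓝 (fl t)))
    (hf_nonneg : ∀ t ∈ Icc (0:ℝ) 1, 0 ≤ f t)
    (hf_jump : ∀ t ∈ Icc (0:ℝ) 1, fl t ≤ f t)
    {s t u : ℝ} (hs0 : 0 ≤ s) (hst : s ≤ t) (ht1 : t ≤ 1)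
    (hu0 : 0 < u) (hmu : mca f fl s t < u) (hus : u ≤ s) :
    infIcc f s t ≤ f u := by
  by_contra! hfu
  set B := {x | x ∈ Icc u s ∧ f x < infIcc f s t}
  have huB : u ∈ B := ⟨⟨le_rfl, hus⟩, hfu⟩
  have hB : IsLUB B (sSup B) := isLUB_csSup ⟨u, huB⟩ ⟨s, fun x hx => hx.1.2⟩
  set v := sSup B
  have huv : u ≤ v := hB.1 huB
  have hvs : v ≤ s := hB.2 fun x hx => hx.1.2
  have hv : v ∈ Ioc 0 1 := ⟨hu0.trans_le huv, hvs.trans (hst.trans ht1)⟩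
  have hfv : fl v ≤ f v := hf_jump v ⟨hv.1.le, hv.2⟩
  have hge : ∀ x ∈ Ioc v t, infIcc f s t ≤ f x := by
    intro x hx
    rcases le_or_gt x s with hxs | hxs
    · by_contra! h
      exact (hB.1 ⟨⟨huv.trans hx.1.le, hxs⟩, h⟩).not_gt hx.1
    · exact infIcc_le hf_nonneg hs0 ht1 ⟨hxs.le, hx.2⟩
  have hflv : fl v ≤ infIcc f s t := by
    by_cases hvB : v ∈ B
    · exact hfv.trans hvB.2.le
    · exact leftLim_le_of_frequently hf_left hv
        ((hB.frequently_mem_nhdsLT ⟨u, huB⟩ hvB).mono fun x hx => hx.2.le)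
  have hprec : ∀ w ∈ Icc v t, fl v ≤ f w := by
    intro w hw
    rcases hw.1.eq_or_lt with rfl | hvw
    · exact hfv
    · exact hflv.trans (hge w ⟨hvw, hw.2⟩)
  have hvm : v ≤ mca f fl s t :=
    le_mca ⟨hv.1.le, hv.2⟩ ⟨hvs, le_infIcc hvs fun w hw => hprec w ⟨hw.1, hw.2.trans hst⟩⟩
      ⟨hvs.trans hst, le_infIcc (hvs.trans hst) hprec⟩
  linarith

theorem infIcc_le_of_mem_Icc_mca
    (hf_right : ∀ t ∈ Ico (0:ℝ) 1, Tendsto f (𝓝[≥] t) (𝓝 (f t)))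
    (hf_left : ∀ t ∈ Ioc (0:ℝ) 1, Tendsto f (𝓝[<] t) (𝓝 (fl t)))
    (hfl0 : fl 0 = 0)
    (hf_nonneg : ∀ t ∈ Icc (0:ℝ) 1, 0 ≤ f t)
    (hf_jump : ∀ t ∈ Icc (0:ℝ) 1, fl t ≤ f t)
    {s t x : ℝ} (hs : s ∈ Icc (0:ℝ) 1) (ht : t ∈ Icc (0:ℝ) 1) (hst : s < t)
    (hx : x ∈ Icc (mca f fl s t) s) :
    infIcc f s t ≤ f x := by
  have hm := mca_mem_Icc hfl0 hf_nonneg hs ht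
  have key := fun u => infIcc_le_of_mca_lt hf_left hf_nonneg hf_jump (u := u) hs.1 hst.le ht.2
  rcases hx.1.eq_or_lt with rfl | hmx
  · rcases hm.2.eq_or_lt with hms | hms
    · rw [hms]
      exact infIcc_le hf_nonneg hs.1 ht.2 ⟨le_rfl, hst.le⟩
    · refine ge_of_tendsto ((hf_right _ ⟨hm.1, hms.trans (hst.trans_le ht.2)⟩).mono_left
        (nhdsWithin_mono _ Ioi_subset_Ici_self)) ?_
      filter_upwards [Ioc_mem_nhdsGT hms] with y hy
      exact key _ (hm.1.trans_lt hy.1) hy.1 hy.2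
  · exact key _ (hm.1.trans_lt hmx) hmx hx.2

theorem infIcc_mca_eq
    (hf_right : ∀ t ∈ Ico (0:ℝ) 1, Tendsto f (𝓝[≥] t) (𝓝 (f t)))
    (hf_left : ∀ t ∈ Ioc (0:ℝ) 1, Tendsto f (𝓝[<] t) (𝓝 (fl t)))
    (hfl0 : fl 0 = 0)
    (hf_nonneg : ∀ t ∈ Icc (0:ℝ) 1, 0 ≤ f t)
    (hf_jump : ∀ t ∈ Icc (0:ℝ) 1, fl t ≤ f t)
    {s t : ℝ} (hs : s ∈ Icc (0:ℝ) 1) (ht : t ∈ Icc (0:ℝ) 1) (hst : s < t) :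
    infIcc f (mca f fl s t) t = infIcc f s t := by
  have hm := mca_mem_Icc hfl0 hf_nonneg hs ht
  refine le_antisymm (infIcc_mono hf_nonneg hm.1 ht.2 hm.2 le_rfl hst.le)
    (le_infIcc (hm.2.trans hst.le) fun x hx => ?_)
  rcases le_or_gt x s with hxs | hxs
  · exact infIcc_le_of_mem_Icc_mca hf_right hf_left hfl0 hf_nonneg hf_jump hs ht hst ⟨hx.1, hxs⟩
  · exact infIcc_le hf_nonneg hs.1 ht.2 ⟨hxs.le, hx.2⟩

end Looptree

theorem looptreeDist_upper_bound_general (f fl : ℝ → ℝ)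
    (hf_right : ∀ t ∈ Set.Ico (0:ℝ) 1, Filter.Tendsto f (nhdsWithin t (Set.Ici t)) (nhds (f t)))
    (hf_left : ∀ t ∈ Set.Ioc (0:ℝ) 1, Filter.Tendsto f (nhdsWithin t (Set.Iio t)) (nhds (fl t)))
    (hfl0 : fl 0 = 0)
    (hf_nonneg : ∀ t ∈ Set.Icc (0:ℝ) 1, 0 ≤ f t)
    (hf_jump : ∀ t ∈ Set.Icc (0:ℝ) 1, fl t ≤ f t)
    (s t : ℝ) (hs : s ∈ Set.Icc (0:ℝ) 1) (ht : t ∈ Set.Icc (0:ℝ) 1) (hst : s < t) :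
    looptreeDist f fl s t ≤ f s + fl t - 2 * infIcc f s t := by
  obtain ⟨hm0, hms⟩ := mca_mem_Icc hfl0 hf_nonneg hs ht
  have hI := infIcc_mca_eq hf_right hf_left hfl0 hf_nonneg hf_jump hs ht hst
  set m := mca f fl s t
  have hcyc : cycleDist (jump f fl m) (xpos f fl m s) (xpos f fl m t)
      ≤ infIcc f m s - infIcc f m t := by
    refine (cycleDist_le_abs_sub _ _ _).trans_eq ?_
    rw [xpos, xpos, sub_sub_sub_cancel_right,
      abs_of_nonneg (sub_nonneg.2 (infIcc_mono hf_nonneg hm0 ht.2 le_rfl hst.le hms))]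
  have hds := dZero_le_apply_sub hf_left hf_nonneg hf_jump hm0 hms hs.2
  have hdt := dZero_le_leftLim_sub hf_left hf_nonneg hm0 (hms.trans_lt hst) ht.2
  rw [looptreeDist]
  linarith

/-- upper bound on the looptree pseudo-distance: if 0 ≤ s < t ≤ 1 then
d(s,t) ≤ f(s) + f(t-) - 2 I_s^t. -/
theorem looptreeDist_upper_bound (f fl : ℝ → ℝ)
    (hf_right : ∀ t ∈ Set.Ico (0:ℝ) 1, Filter.Tendsto f (nhdsWithin t (Set.Ici t)) (nhds (f t)))
    (hf_left : ∀ t ∈ Set.Ioc (0:ℝ) 1, Filter.Tendsto f (nhdsWithin t (Set.Iio t)) (nhds (fl t)))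
    (hfl0 : fl 0 = 0)
    (hf_nonneg : ∀ t ∈ Set.Icc (0:ℝ) 1, 0 ≤ f t)
    (hf_jump : ∀ t ∈ Set.Icc (0:ℝ) 1, fl t ≤ f t)
    (hf0 : f 0 = 0) (hf1 : f 1 = 0)
    (s t : ℝ) (hs : s ∈ Set.Icc (0:ℝ) 1) (ht : t ∈ Set.Icc (0:ℝ) 1) (hst : s < t) :
    looptreeDist f fl s t ≤ f s + fl t - 2 * infIcc f s t :=
  looptreeDist_upper_bound_general f fl hf_right hf_left hfl0 hf_nonneg hf_jump s t hs ht hst
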